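/- arXiv:1403.1836 — 2 statements merged into one kernel-verified Lean document; each statement's English description precedes it below -/
import Mathlib

section
/- Let p > 1. If all 2L points r₁,...,r_L, b₁,...,b_L together with their antipodes (the points x + 1/2 taken modulo 1) are pairwise distinct (4L distinct points of [0,1) in total), then every optimal matching is cyclic. -/
/-!
Lift the matching to the real line: a lift `x + n` of a red point `x` goes to `x + n + δ`, where
`δ` is the signed displacement from `x` to its partner along a shortest arc. Since `|·|^p` is
strictly convex for `p > 1`, two lifted arrows of an optimal matching never cross: exchanging the
partners of a crossing pair would strictly lower the cost. So the lifted map is strictly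
increasing, and three red points `r₁ < r₂ < r₃ < r₁ + 1` go to `c₁ < c₂ < c₃ < c₁ + 1`, whose
fractional parts, the blue partners, are again cyclically oriented.
-/

/-- Distance on the circle of unit circumference, for points represented in `[0,1)`. -/
noncomputable def circleDist (x y : ℝ) : ℝ := min |x - y| (1 - |x - y|)

/-- The antipode of a point of `[0,1)`: the point `x + 1/2` taken modulo `1`. -/
noncomputable def antipode (x : ℝ) : ℝ := if x + 1/2 < 1 then x + 1/2 else x + 1/2 - 1

/-- An ordered triple of pairwise distinct points of `[0,1)` is cyclically oriented if
the points appear in counter-clockwise order. -/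
def CyclicallyOriented (x y z : ℝ) : Prop :=
  (x < y ∧ y < z) ∨ (y < z ∧ z < x) ∨ (z < x ∧ x < y)

open Finset Function Set

theorem strictConvexOn_abs_rpow {p : ℝ} (hp : 1 < p) :
    StrictConvexOn ℝ univ (fun x : ℝ => |x| ^ p) := by
  refine LinearOrder.strictConvexOn_of_lt convex_univ fun x _ y _ hxy a b ha hb hab => ?_
  simp only [smul_eq_mul]
  have htri : |a * x + b * y| ≤ a * |x| + b * |y| := by
    simpa [abs_mul, abs_of_pos ha, abs_of_pos hb] using abs_add_le (a * x) (b * y)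
  have hconv := (strictConvexOn_rpow hp).convexOn.2 (mem_Ici.2 (abs_nonneg x))
    (mem_Ici.2 (abs_nonneg y)) ha.le hb.le hab
  simp only [smul_eq_mul] at hconv
  by_cases habs : |x| = |y|
  · -- here `x = -y ≠ 0`, so the triangle inequality is strict
    have hx : x = -y := (abs_eq_abs.1 habs).resolve_left hxy.ne
    have hy : 0 < y := by linarith
    have hlt : |a * x + b * y| < a * |x| + b * |y| := by
      rw [hx, abs_neg, abs_of_pos hy, abs_lt]
      constructor <;> nlinarith
    exact (Real.rpow_lt_rpow (abs_nonneg _) hlt (by linarith)).trans_le hconv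
  · exact (Real.rpow_le_rpow (abs_nonneg _) htri (by linarith)).trans_lt
      ((strictConvexOn_rpow hp).2 (mem_Ici.2 (abs_nonneg x)) (mem_Ici.2 (abs_nonneg y)) habs
        ha hb hab)

theorem StrictConvexOn.map_add_map_add_sub_lt {s : Set ℝ} {f : ℝ → ℝ}
    (hf : StrictConvexOn ℝ s f) {U u V : ℝ} (hU : U ∈ s) (hV : V ∈ s) (hUu : U < u)
    (huV : u < V) : f u + f (U + V - u) < f U + f V := by
  have hUV : 0 < V - U := by linarith
  have ha : 0 < (V - u) / (V - U) := div_pos (by linarith) hUV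
  have hb : 0 < (u - U) / (V - U) := div_pos (by linarith) hUV
  have hab : (V - u) / (V - U) + (u - U) / (V - U) = 1 := by field_simp; ring
  have h₁ := hf.2 hU hV (by linarith) ha hb hab
  have h₂ := hf.2 hU hV (by linarith) hb ha (by linarith)
  simp only [smul_eq_mul] at h₁ h₂
  have eu : (V - u) / (V - U) * U + (u - U) / (V - U) * V = u := by field_simp; ring
  have ev : (u - U) / (V - U) * U + (V - u) / (V - U) * V = U + V - u := by field_simp; ring
  rw [eu] at h₁
  rw [ev] at h₂
  linear_combination h₁ + h₂ + (f U + f V) * hab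

theorem add_le_add_swap_of_forall_sum_le {ι M : Type*} [Fintype ι] [DecidableEq ι]
    [AddCommMonoid M] [PartialOrder M] [IsOrderedCancelAddMonoid M] (c : ι → ι → M)
    {σ : Equiv.Perm ι} (hσ : ∀ τ : Equiv.Perm ι, ∑ i, c i (σ i) ≤ ∑ i, c i (τ i))
    {i j : ι} (hij : i ≠ j) : c i (σ i) + c j (σ j) ≤ c i (σ j) + c j (σ i) := by
  have hsplit : ∀ τ : Equiv.Perm ι,
      ∑ k, c k (τ k) = c i (τ i) + c j (τ j) + ∑ k ∈ {i, j}ᶜ, c k (τ k) := fun τ => by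
    rw [← sum_add_sum_compl {i, j}, sum_pair hij]
  have hrest : ∑ k ∈ {i, j}ᶜ, c k ((σ * Equiv.swap i j) k) = ∑ k ∈ {i, j}ᶜ, c k (σ k) := by
    refine sum_congr rfl fun k hk => ?_
    have hk : k ≠ i ∧ k ≠ j := by simpa [not_or] using hk
    rw [Equiv.Perm.mul_apply, Equiv.swap_apply_of_ne_of_ne hk.1 hk.2]
  have h := hσ (σ * Equiv.swap i j)
  rw [hsplit, hsplit, hrest] at h
  simpa using h

theorem CyclicallyOriented.rotate {x y z : ℝ} (h : CyclicallyOriented x y z) :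
    CyclicallyOriented y z x := by
  unfold CyclicallyOriented at *
  tauto

theorem cyclicallyOriented_iff_not_swap {x y z : ℝ} (hxy : x ≠ y) (hyz : y ≠ z) (hxz : x ≠ z) :
    CyclicallyOriented x y z ↔ ¬ CyclicallyOriented x z y := by
  unfold CyclicallyOriented
  constructor
  · rintro (⟨h₁, h₂⟩ | ⟨h₁, h₂⟩ | ⟨h₁, h₂⟩) (⟨h₃, h₄⟩ | ⟨h₃, h₄⟩ | ⟨h₃, h₄⟩) <;> linarith
  · intro h
    rcases hxy.lt_or_gt with h₁ | h₁ <;> rcases hyz.lt_or_gt with h₂ | h₂ <;>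
      rcases hxz.lt_or_gt with h₃ | h₃ <;> first | (exfalso; linarith) | tauto

theorem circleDist_le_abs_sub_sub_intCast (x y : ℝ) (k : ℤ) : circleDist x y ≤ |y - x - k| := by
  rcases eq_or_ne k 0 with rfl | hk
  · rw [Int.cast_zero, sub_zero, abs_sub_comm]
    exact min_le_left _ _
  · have h₁ : (1 : ℝ) ≤ |(k : ℝ)| := by exact_mod_cast Int.one_le_abs hk
    have h₂ : |(k : ℝ)| ≤ |y - x| + |y - x - k| := by
      simpa using abs_sub (y - x) (y - x - k)
    rw [abs_sub_comm] at h₂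
    exact (min_le_right _ _).trans (by linarith)

noncomputable def circleDisp (x y : ℝ) : ℝ := y - x - round (y - x)

theorem circleDist_eq_abs_circleDisp {x y : ℝ} (hx : x ∈ Ico (0 : ℝ) 1)
    (hy : y ∈ Ico (0 : ℝ) 1) : circleDist x y = |circleDisp x y| := by
  refine le_antisymm (circleDist_le_abs_sub_sub_intCast x y _) (le_min ?_ ?_) <;>
    unfold circleDisp
  · simpa [abs_sub_comm] using round_le (y - x) 0
  · obtain ⟨hx₀, hx₁⟩ := hx
    obtain ⟨hy₀, hy₁⟩ := hy
    rcases le_total x y with h | h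
    · have := round_le (y - x) 1
      rw [abs_of_nonpos (by linarith : x - y ≤ 0)]
      rw [abs_of_nonpos (by push_cast; linarith : y - x - ((1 : ℤ) : ℝ) ≤ 0)] at this
      push_cast at this
      linarith
    · have := round_le (y - x) (-1)
      rw [abs_of_nonneg (by linarith : 0 ≤ x - y)]
      rw [abs_of_nonneg (by push_cast; linarith : 0 ≤ y - x - ((-1 : ℤ) : ℝ))] at this
      push_cast at this
      linarith

theorem fract_add_circleDisp {x y : ℝ} (hy : y ∈ Ico (0 : ℝ) 1) :
    Int.fract (x + circleDisp x y) = y := by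
  rw [circleDisp,
    show x + (y - x - round (y - x)) = y + ((-round (y - x) : ℤ) : ℝ) by push_cast; ring,
    Int.fract_add_intCast, Int.fract_eq_self.2 hy]

theorem cyclicallyOriented_fract {c₁ c₂ c₃ : ℝ} (h₁₂ : c₁ < c₂) (h₂₃ : c₂ < c₃)
    (h₃₁ : c₃ < c₁ + 1) :
    CyclicallyOriented (Int.fract c₁) (Int.fract c₂) (Int.fract c₃) := by
  have f₁₂ := Int.floor_mono h₁₂.le
  have f₂₃ := Int.floor_mono h₂₃.le
  have f₃₁ : ⌊c₃⌋ ≤ ⌊c₁⌋ + 1 := by simpa using Int.floor_mono h₃₁.le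
  unfold CyclicallyOriented Int.fract
  obtain h | ⟨h₂, h₃⟩ | ⟨h₂, h₃⟩ : ⌊c₃⌋ = ⌊c₁⌋ ∨ (⌊c₂⌋ = ⌊c₁⌋ ∧ ⌊c₃⌋ = ⌊c₁⌋ + 1) ∨
      (⌊c₂⌋ = ⌊c₁⌋ + 1 ∧ ⌊c₃⌋ = ⌊c₁⌋ + 1) := by omega
  · have h₂ : ⌊c₂⌋ = ⌊c₁⌋ := by omega
    left; rw [h, h₂]; constructor <;> linarith
  · right; right; rw [h₂, h₃]; push_cast; constructor <;> linarith
  · right; left; rw [h₂, h₃]; push_cast; constructor <;> linarith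

theorem add_circleDisp_lt_of_add_le_add_swap {p : ℝ} (hp : 1 < p) {x₁ x₂ y₁ y₂ : ℝ}
    (hx₁ : x₁ ∈ Ico (0 : ℝ) 1) (hx₂ : x₂ ∈ Ico (0 : ℝ) 1)
    (hy₁ : y₁ ∈ Ico (0 : ℝ) 1) (hy₂ : y₂ ∈ Ico (0 : ℝ) 1) (hy : y₁ ≠ y₂)
    (hopt : circleDist x₁ y₁ ^ p + circleDist x₂ y₂ ^ p ≤
      circleDist x₁ y₂ ^ p + circleDist x₂ y₁ ^ p)
    {n : ℤ} (hx : x₁ < x₂ + n) :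
    x₁ + circleDisp x₁ y₁ < x₂ + n + circleDisp x₂ y₂ := by
  set δ₁ := circleDisp x₁ y₁ with hδ₁
  set δ₂ := circleDisp x₂ y₂ with hδ₂
  by_contra! hle
  rcases hle.eq_or_lt with heq | hlt
  · apply hy
    rw [← fract_add_circleDisp (x := x₁) hy₁, ← fract_add_circleDisp (x := x₂) hy₂, ← hδ₁, ← hδ₂,
      ← heq, add_right_comm, Int.fract_add_intCast]
  -- rematching crosswise moves both displacements strictly inside `(δ₂, δ₁)`
  set u := x₂ + n + δ₂ - x₁
  have hexchange := (strictConvexOn_abs_rpow hp).map_add_map_add_sub_lt (mem_univ δ₂)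
    (mem_univ δ₁) (by linarith : δ₂ < u) (by linarith : u < δ₁)
  have hp₀ : 0 ≤ p := by linarith
  have hcross₁ : circleDist x₁ y₂ ^ p ≤ |u| ^ p := by
    refine Real.rpow_le_rpow (circleDist_eq_abs_circleDisp hx₁ hy₂ ▸ abs_nonneg _) ?_ hp₀
    convert circleDist_le_abs_sub_sub_intCast x₁ y₂ (round (y₂ - x₂) - n) using 2
    simp only [u, hδ₂, circleDisp]; push_cast; ring
  have hcross₂ : circleDist x₂ y₁ ^ p ≤ |δ₂ + δ₁ - u| ^ p := by
    refine Real.rpow_le_rpow (circleDist_eq_abs_circleDisp hx₂ hy₁ ▸ abs_nonneg _) ?_ hp₀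
    convert circleDist_le_abs_sub_sub_intCast x₂ y₁ (round (y₁ - x₁) + n) using 2
    simp only [u, hδ₁, circleDisp]; push_cast; ring
  rw [circleDist_eq_abs_circleDisp hx₁ hy₁, circleDist_eq_abs_circleDisp hx₂ hy₂] at hopt
  linarith

theorem cyclicallyOriented_fract_add_of_lt {ι : Type*} {x δ : ι → ℝ}
    (hx : ∀ i, x i ∈ Ico (0 : ℝ) 1)
    (hmono : ∀ i j (n : ℤ), x i < x j + n → x i + δ i < x j + n + δ j)
    {i j k : ι} (hij : x i < x j) (hjk : x j < x k) :
    CyclicallyOriented (Int.fract (x i + δ i)) (Int.fract (x j + δ j)) (Int.fract (x k + δ k)) := by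
  have h₁₂ := hmono i j 0 (by simpa using hij)
  have h₂₃ := hmono j k 0 (by simpa using hjk)
  have h₃₁ := hmono k i 1 (by have := (hx k).2; have := (hx i).1; push_cast; linarith)
  push_cast at h₁₂ h₂₃ h₃₁
  exact cyclicallyOriented_fract (by linarith) (by linarith) (by linarith)

theorem cyclicallyOriented_iff_of_forall_lt {ι : Type*} {x y : ι → ℝ} (hx : Injective x)
    (hy : Injective y) (h : ∀ i j k, x i < x j → x j < x k →
      CyclicallyOriented (y i) (y j) (y k))
    {i j k : ι} (hij : i ≠ j) (hik : i ≠ k) (hjk : j ≠ k) :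
    CyclicallyOriented (x i) (x j) (x k) ↔ CyclicallyOriented (y i) (y j) (y k) := by
  have hfwd : ∀ i j k, CyclicallyOriented (x i) (x j) (x k) →
      CyclicallyOriented (y i) (y j) (y k) := by
    rintro i j k (⟨h₁, h₂⟩ | ⟨h₁, h₂⟩ | ⟨h₁, h₂⟩)
    · exact h i j k h₁ h₂
    · exact (h j k i h₁ h₂).rotate.rotate
    · exact (h k i j h₁ h₂).rotate
  refine ⟨hfwd i j k, fun hyijk => by_contra fun hxijk => ?_⟩
  have hyikj := hfwd i k j
    ((cyclicallyOriented_iff_not_swap (hx.ne hik) (hx.ne hjk.symm) (hx.ne hij)).2 hxijk)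
  exact (cyclicallyOriented_iff_not_swap (hy.ne hik) (hy.ne hjk.symm) (hy.ne hij)).1 hyikj hyijk

open Finset in
/-- For `p > 1`, if the `2L` points together with their antipodes are pairwise
distinct, then every optimal matching on the circle is cyclic. -/
theorem optimal_circle_matching_cyclic_of_one_lt_exponent
    (p : ℝ) (hp : 1 < p) (L : ℕ)
    (r b : Fin L → ℝ)
    (hr : ∀ i, r i ∈ Set.Ico (0 : ℝ) 1) (hb : ∀ i, b i ∈ Set.Ico (0 : ℝ) 1)
    (hdist : Function.Injective
      (Sum.elim (Sum.elim r b) (Sum.elim (fun i => antipode (r i)) (fun i => antipode (b i))) :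
        (Fin L ⊕ Fin L) ⊕ (Fin L ⊕ Fin L) → ℝ))
    (π : Equiv.Perm (Fin L))
    (hopt : ∀ π' : Equiv.Perm (Fin L),
      ∑ i, circleDist (r i) (b (π i)) ^ p ≤ ∑ i, circleDist (r i) (b (π' i)) ^ p) :
    ∀ i₁ i₂ i₃ : Fin L, i₁ ≠ i₂ → i₁ ≠ i₃ → i₂ ≠ i₃ →
      (CyclicallyOriented (r i₁) (r i₂) (r i₃) ↔
        CyclicallyOriented (b (π i₁)) (b (π i₂)) (b (π i₃))) := by
  have hr_inj : Injective r := hdist.comp (Sum.inl_injective.comp Sum.inl_injective)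
  have hb_inj : Injective b := hdist.comp (Sum.inl_injective.comp Sum.inr_injective)
  have hfract : ∀ i, Int.fract (r i + circleDisp (r i) (b (π i))) = b (π i) :=
    fun i => fract_add_circleDisp (hb _)
  have hmono : ∀ i j (n : ℤ), r i < r j + n →
      r i + circleDisp (r i) (b (π i)) < r j + n + circleDisp (r j) (b (π j)) := by
    intro i j n hij
    rcases eq_or_ne i j with rfl | hne
    · linarith
    exact add_circleDisp_lt_of_add_le_add_swap hp (hr i) (hr j) (hb _) (hb _)
      (hb_inj.ne (π.injective.ne hne))
      (add_le_add_swap_of_forall_sum_le (fun i j => circleDist (r i) (b j) ^ p) hopt hne) hij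
  intro i₁ i₂ i₃ h₁₂ h₁₃ h₂₃
  refine cyclicallyOriented_iff_of_forall_lt hr_inj (hb_inj.comp π.injective)
    (fun i j k hij hjk => ?_) h₁₂ h₁₃ h₂₃
  simpa only [comp_apply, hfract] using cyclicallyOriented_fract_add_of_lt hr hmono hij hjk
end

section
/- Let 0 < η < 1/3 and let q(x, y) be the centered bivariate Gaussian probability density with covariance matrix C given by C₁₁ = C₂₂ = 1/12 and C₁₂ = C₂₁ = 1/12 − η/2 (so det C = η(1 − 3η)/12 > 0). Then ∫_ℝ ∫_ℝ sgn(x·y) · q(x, y) dx dy = (2/π) · arctan( (1 − 6η) / √(12·η·(1 − 3η)) ). Consequently, the two-point spin correlation of the critical one-dimensional Grid-Poisson matching with periodic boundary conditions at p = 2, in the continuum limit, at rescaled separation τ ∈ (0,1), equals G_pbc(τ) = (2/π)·arctan((1 − 6τ(1−τ))/√(12·τ(1−τ)·(1 − 3τ(1−τ)))), which vanishes exactly at τ = (3 − √3)/6 and τ = 1 − (3 − √3)/6. -/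
/-!
Completing the square, `x² − 2ρxy + y² = (y − ρx)² + (1 − ρ²)x²` with `ρ = 1 − 6η` and
`1 − ρ² = 12η(1 − 3η)`, so the density factors as `exp(−6x²) · exp(−c(y − ρx)²)` with
`c = 1 / (2η(1 − 3η))`. Integrating `sgn y` against the Gaussian in `y` centred at `ρx` gives
its mass on `[−ρx, ρx]`, which is odd in `x`; so the whole integral is `4 ∫₀^∞ e^{−ax²} ∫₀^{ρx} e^{−ct²} dt dx` with `a = 6`. The
double integral has `ρ`-derivative `1 / (2(a + cρ²))` (differentiate under the integral sign),
and integrating in `ρ` gives the arctangent.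
-/

open Real MeasureTheory Set Filter

theorem Real.sign_mul (x y : ℝ) : Real.sign (x * y) = Real.sign x * Real.sign y := by
  rcases lt_trichotomy x 0 with hx | rfl | hx <;> rcases lt_trichotomy y 0 with hy | rfl | hy <;>
    simp [Real.sign_of_neg, Real.sign_of_pos, mul_pos_of_neg_of_neg, mul_neg_of_neg_of_pos,
      mul_neg_of_pos_of_neg, *]

theorem Real.measurable_sign : Measurable Real.sign :=
  Measurable.ite measurableSet_Iio measurable_const
    (Measurable.ite measurableSet_Ioi measurable_const measurable_const)

theorem Real.abs_sign_le_one (x : ℝ) : |Real.sign x| ≤ 1 := by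
  rcases Real.sign_apply_eq x with h | h | h <;> simp [h]

namespace GaussianSignCorrelation

theorem intervalIntegral_zero_neg_of_even {f : ℝ → ℝ} (heven : ∀ x, f (-x) = f x) (u : ℝ) :
    ∫ t in (0 : ℝ)..-u, f t = -∫ t in (0 : ℝ)..u, f t := by
  simpa [heven, intervalIntegral.integral_symm (-u)] using
    (intervalIntegral.integral_comp_neg (a := 0) (b := u) f).symm

theorem integral_sign_mul_comp_sub_of_even {f : ℝ → ℝ} (hf : Integrable f)
    (heven : ∀ x, f (-x) = f x) (μ : ℝ) :
    ∫ y, Real.sign y * f (y - μ) = 2 * ∫ t in (0 : ℝ)..μ, f t := by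
  have hshift : ∫ y, Real.sign y * f (y - μ) = ∫ y, Real.sign (y + μ) * f y := by
    simpa using (integral_add_right_eq_self (fun y => Real.sign y * f (y - μ)) μ).symm
  have hint : Integrable fun y => Real.sign (y + μ) * f y :=
    hf.bdd_mul ((Real.measurable_sign.comp (measurable_add_const μ)).aestronglyMeasurable)
      (Eventually.of_forall fun y => (Real.norm_eq_abs _).trans_le (Real.abs_sign_le_one _))
  have hleft : ∫ y in Iic (-μ), Real.sign (y + μ) * f y = -∫ y in Iic (-μ), f y := by
    rw [integral_Iic_eq_integral_Iio, integral_Iic_eq_integral_Iio, ← integral_neg]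
    refine setIntegral_congr_fun measurableSet_Iio fun y (hy : y < -μ) => ?_
    rw [Real.sign_of_neg (by linarith), neg_one_mul]
  have hright : ∫ y in Ioi (-μ), Real.sign (y + μ) * f y = ∫ y in Iic μ, f y := by
    calc _ = ∫ y in Ioi (-μ), f y := setIntegral_congr_fun measurableSet_Ioi
            fun y (hy : -μ < y) => by rw [Real.sign_of_pos (by linarith), one_mul]
      _ = ∫ y in Iic μ, f y := by simp_rw [← integral_comp_neg_Iic, heven]
  have hsymm : ∫ t in -μ..μ, f t = 2 * ∫ t in (0 : ℝ)..μ, f t := by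
    rw [← intervalIntegral.integral_add_adjacent_intervals (b := 0) hf.intervalIntegrable
      hf.intervalIntegrable, intervalIntegral.integral_symm,
      intervalIntegral_zero_neg_of_even heven]
    ring
  rw [hshift, ← intervalIntegral.integral_Iic_add_Ioi hint.integrableOn hint.integrableOn, hleft,
    hright, ← hsymm, ← intervalIntegral.integral_Iic_sub_Iic hf.integrableOn hf.integrableOn]
  ring

theorem integral_sign_mul_of_odd {g : ℝ → ℝ} (hodd : ∀ x, g (-x) = -g x) :
    ∫ x, Real.sign x * g x = 2 * ∫ x in Ioi (0 : ℝ), g x := by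
  rw [← integral_comp_abs]
  congr 1 with x
  rcases lt_trichotomy x 0 with hx | rfl | hx
  · rw [Real.sign_of_neg hx, abs_of_neg hx, hodd, neg_one_mul]
  · simp only [Real.sign_zero, zero_mul, abs_zero]
    linarith [neg_zero (G := ℝ) ▸ hodd 0]
  · rw [Real.sign_of_pos hx, abs_of_pos hx, one_mul]

theorem integral_Ioi_mul_exp_neg_mul_sq {b : ℝ} (hb : 0 < b) :
    ∫ x in Ioi (0 : ℝ), x * exp (-b * x ^ 2) = (2 * b)⁻¹ := by
  have := integral_rpow_mul_exp_neg_mul_rpow two_pos (by norm_num : (-1 : ℝ) < 1) hb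
  simp_rw [rpow_one, rpow_two] at this
  rw [this]
  norm_num [Gamma_one, rpow_neg_one]

noncomputable def gaussianPrimitive (c u : ℝ) : ℝ := ∫ t in (0 : ℝ)..u, exp (-c * t ^ 2)

theorem hasDerivAt_gaussianPrimitive (c u : ℝ) :
    HasDerivAt (gaussianPrimitive c) (exp (-c * u ^ 2)) u :=
  (Continuous.integral_hasStrictDerivAt (by fun_prop) 0 u).hasDerivAt

@[fun_prop]
theorem continuous_gaussianPrimitive (c : ℝ) : Continuous (gaussianPrimitive c) :=
  continuous_iff_continuousAt.2 fun u => (hasDerivAt_gaussianPrimitive c u).continuousAt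

theorem gaussianPrimitive_neg (c u : ℝ) : gaussianPrimitive c (-u) = -gaussianPrimitive c u :=
  intervalIntegral_zero_neg_of_even (fun t => by rw [neg_sq]) u

theorem abs_gaussianPrimitive_le {c : ℝ} (hc : 0 ≤ c) (u : ℝ) : |gaussianPrimitive c u| ≤ |u| := by
  have h := intervalIntegral.norm_integral_le_of_norm_le_const (a := 0) (b := u) (C := 1)
    (f := fun t => exp (-c * t ^ 2)) fun t _ => by
      rw [Real.norm_of_nonneg (exp_pos _).le, exp_le_one_iff]
      nlinarith [sq_nonneg t]
  simpa [gaussianPrimitive] using h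

theorem hasDerivAt_integral_Ioi_exp_mul_gaussianPrimitive {a c : ℝ} (ha : 0 < a) (hc : 0 ≤ c)
    (b : ℝ) :
    HasDerivAt (fun b => ∫ x in Ioi (0 : ℝ), exp (-a * x ^ 2) * gaussianPrimitive c (b * x))
      (2 * (a + c * b ^ 2))⁻¹ b := by
  have hbound : Integrable (fun x : ℝ => ‖x * exp (-a * x ^ 2)‖) :=
    (integrable_mul_exp_neg_mul_sq ha).norm
  have hderiv : ∀ b' x : ℝ, HasDerivAt (fun b => exp (-a * x ^ 2) * gaussianPrimitive c (b * x))
      (exp (-a * x ^ 2) * (exp (-c * (b' * x) ^ 2) * x)) b' := fun b' x =>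
    (((hasDerivAt_gaussianPrimitive c (b' * x)).comp b' (hasDerivAt_mul_const x)).const_mul _)
  have hmeas : ∀ b', AEStronglyMeasurable
      (fun x : ℝ => exp (-a * x ^ 2) * gaussianPrimitive c (b' * x)) (volume.restrict (Ioi 0)) :=
    fun b' => (by fun_prop : Continuous _).aestronglyMeasurable
  have hint : Integrable (fun x : ℝ => exp (-a * x ^ 2) * gaussianPrimitive c (b * x))
      (volume.restrict (Ioi 0)) := by
    refine ((hbound.const_mul |b|).restrict).mono' (hmeas b) (Eventually.of_forall fun x => ?_)
    rw [norm_mul, norm_mul, Real.norm_of_nonneg (exp_pos _).le, Real.norm_eq_abs,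
      Real.norm_eq_abs]
    calc exp (-a * x ^ 2) * |gaussianPrimitive c (b * x)| ≤ exp (-a * x ^ 2) * |b * x| :=
          mul_le_mul_of_nonneg_left (abs_gaussianPrimitive_le hc _) (exp_pos _).le
      _ = |b| * (|x| * exp (-a * x ^ 2)) := by rw [abs_mul]; ring
  have key := hasDerivAt_integral_of_dominated_loc_of_deriv_le
    (μ := volume.restrict (Ioi (0 : ℝ))) (x₀ := b) (Metric.ball_mem_nhds b one_pos)
    (Eventually.of_forall hmeas) hint
    (bound := fun x => ‖x * exp (-a * x ^ 2)‖)
    (Continuous.aestronglyMeasurable (by fun_prop))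
    (Eventually.of_forall fun x b' _ => ?_) hbound.restrict
    (Eventually.of_forall fun x b' _ => hderiv b' x)
  · rw [← integral_Ioi_mul_exp_neg_mul_sq (by positivity : 0 < a + c * b ^ 2)]
    refine key.2.congr_deriv (congrArg _ (funext fun x => ?_))
    rw [show -(a + c * b ^ 2) * x ^ 2 = -a * x ^ 2 + -c * (b * x) ^ 2 by ring, exp_add]
    ring
  · have hle : ‖exp (-c * (b' * x) ^ 2)‖ ≤ 1 := by
      rw [Real.norm_of_nonneg (exp_pos _).le, exp_le_one_iff]
      nlinarith [sq_nonneg (b' * x)]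
    calc ‖exp (-a * x ^ 2) * (exp (-c * (b' * x) ^ 2) * x)‖
        = ‖x * exp (-a * x ^ 2)‖ * ‖exp (-c * (b' * x) ^ 2)‖ := by simp only [norm_mul]; ring
      _ ≤ ‖x * exp (-a * x ^ 2)‖ := mul_le_of_le_one_right (norm_nonneg _) hle

theorem integral_Ioi_exp_mul_gaussianPrimitive {a c : ℝ} (ha : 0 < a) (hc : 0 < c) (b : ℝ) :
    ∫ x in Ioi (0 : ℝ), exp (-a * x ^ 2) * gaussianPrimitive c (b * x) =
      arctan (√(c / a) * b) / (2 * √(a * c)) := by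
  set k := √(c / a)
  have hk : 0 < k := sqrt_pos.2 (div_pos hc ha)
  have hk2 : k ^ 2 = c / a := sq_sqrt (div_pos hc ha).le
  have hsqrt : √(a * c) = a * k := by
    rw [show a * c = a ^ 2 * (c / a) by field_simp, sqrt_mul (sq_nonneg a), sqrt_sq ha.le]
  have harctan : ∀ b : ℝ, HasDerivAt (fun b => arctan (k * b) / (2 * √(a * c)))
      (2 * (a + c * b ^ 2))⁻¹ b := fun b => by
    refine (((hasDerivAt_id' b).const_mul k).arctan.div_const _).congr_deriv ?_
    rw [hsqrt, show c = a * k ^ 2 by rw [hk2]; field_simp]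
    field_simp
  have hdiff : ∀ b, HasDerivAt (fun b =>
      (∫ x in Ioi (0 : ℝ), exp (-a * x ^ 2) * gaussianPrimitive c (b * x)) -
        arctan (k * b) / (2 * √(a * c))) 0 b := fun b =>
    ((hasDerivAt_integral_Ioi_exp_mul_gaussianPrimitive ha hc.le b).sub (harctan b)).congr_deriv
      (sub_self _)
  have hconst := is_const_of_deriv_eq_zero (fun b => (hdiff b).differentiableAt)
    (fun b => (hdiff b).deriv) b 0
  simp only [zero_mul, gaussianPrimitive, intervalIntegral.integral_same, mul_zero, integral_zero,
    arctan_zero, zero_div, sub_zero] at hconst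
  exact sub_eq_zero.1 hconst

theorem integral_sign_mul_exp_mul_exp {a c : ℝ} (ha : 0 < a) (hc : 0 < c) (ρ : ℝ) :
    ∫ x, ∫ y, Real.sign (x * y) * (exp (-a * x ^ 2) * exp (-c * (y - ρ * x) ^ 2)) =
      2 * arctan (√(c / a) * ρ) / √(a * c) := by
  have hinner : ∀ x, ∫ y, Real.sign (x * y) * (exp (-a * x ^ 2) * exp (-c * (y - ρ * x) ^ 2)) =
      Real.sign x * (2 * (exp (-a * x ^ 2) * gaussianPrimitive c (ρ * x))) := fun x => by
    have hsplit : ∀ y, Real.sign (x * y) * (exp (-a * x ^ 2) * exp (-c * (y - ρ * x) ^ 2)) =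
        Real.sign x * exp (-a * x ^ 2) * (Real.sign y * exp (-c * (y - ρ * x) ^ 2)) := fun y => by
      rw [Real.sign_mul]; ring
    simp_rw [hsplit]
    rw [integral_const_mul, integral_sign_mul_comp_sub_of_even (integrable_exp_neg_mul_sq hc)
      (fun t => by rw [neg_sq]), gaussianPrimitive]
    ring
  simp_rw [hinner]
  rw [integral_sign_mul_of_odd fun x => by rw [neg_sq, mul_neg, gaussianPrimitive_neg]; ring,
    integral_const_mul, integral_Ioi_exp_mul_gaussianPrimitive ha hc]
  ring

theorem one_sub_six_mul_mul_one_sub_eq_zero_iff (τ : ℝ) :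
    1 - 6 * τ * (1 - τ) = 0 ↔ τ = (3 - √3) / 6 ∨ τ = 1 - (3 - √3) / 6 := by
  have h3 : √3 ^ 2 = 3 := sq_sqrt (by norm_num)
  have hfactor : 1 - 6 * τ * (1 - τ) = 6 * ((τ - (3 - √3) / 6) * (τ - (1 - (3 - √3) / 6))) := by
    linear_combination (1 / 6) * h3
  rw [hfactor, mul_eq_zero, mul_eq_zero, sub_eq_zero, sub_eq_zero]
  norm_num

theorem exp_neg_quadratic_div_eq {η : ℝ} (hη : η ≠ 0) (h3η : 1 - 3 * η ≠ 0) (x y : ℝ) :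
    exp (-((x ^ 2 - 2 * (1 - 6 * η) * x * y + y ^ 2) / (2 * η * (1 - 3 * η)))) =
      exp (-6 * x ^ 2) * exp (-(2 * (η * (1 - 3 * η)))⁻¹ * (y - (1 - 6 * η) * x) ^ 2) := by
  have h3η' : 1 - η * 3 ≠ 0 := by rwa [mul_comm]
  rw [← exp_add]
  congr 1
  field_simp
  ring

end GaussianSignCorrelation

open Real in
/-- For `0 < η < 1/3`, the expectation of `sgn(x·y)` under the centered bivariate
Gaussian with covariance `C₁₁ = C₂₂ = 1/12`, `C₁₂ = 1/12 − η/2` (so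
`det C = η(1−3η)/12` and inverse covariance `(1/(η(1−3η)))·[[1, 6η−1],[6η−1, 1]]`)
equals `(2/π)·arctan((1−6η)/√(12η(1−3η)))`. Consequently the two-point spin
correlation `G_pbc(τ)` of the critical periodic problem at `p = 2`, with
`η = τ(1−τ)`, vanishes exactly at `τ = (3−√3)/6` and `τ = 1 − (3−√3)/6`. -/
theorem gaussian_sign_correlation_pbc (η : ℝ) (hη0 : 0 < η) (hη1 : η < 1 / 3) :
    (∫ x : ℝ, ∫ y : ℝ,
        Real.sign (x * y) *
          (Real.exp (-((x ^ 2 - 2 * (1 - 6 * η) * x * y + y ^ 2) / (2 * η * (1 - 3 * η)))) /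
            (2 * π * Real.sqrt (η * (1 - 3 * η) / 12)))
      = (2 / π) * Real.arctan ((1 - 6 * η) / Real.sqrt (12 * η * (1 - 3 * η)))) ∧
    (∀ τ : ℝ, τ ∈ Set.Ioo (0 : ℝ) 1 →
      ((2 / π) * Real.arctan
          ((1 - 6 * τ * (1 - τ)) /
            Real.sqrt (12 * τ * (1 - τ) * (1 - 3 * τ * (1 - τ)))) = 0 ↔
        τ = (3 - Real.sqrt 3) / 6 ∨ τ = 1 - (3 - Real.sqrt 3) / 6)) := by
  refine ⟨?_, fun τ ⟨hτ0, hτ1⟩ => ?_⟩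
  · have hA : 0 < η * (1 - 3 * η) := mul_pos hη0 (by linarith)
    have h3η : 1 - η * 3 ≠ 0 := (by linarith : (0 : ℝ) < 1 - η * 3).ne'
    simp_rw [GaussianSignCorrelation.exp_neg_quadratic_div_eq hη0.ne' (by linarith),
      mul_div_assoc', integral_div,
      GaussianSignCorrelation.integral_sign_mul_exp_mul_exp (by norm_num : (0 : ℝ) < 6)
        (by positivity : 0 < (2 * (η * (1 - 3 * η)))⁻¹)]
    have harg : √((2 * (η * (1 - 3 * η)))⁻¹ / 6) = (√(12 * η * (1 - 3 * η)))⁻¹ := by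
      rw [← sqrt_inv]; congr 1; field_simp; norm_num
    have hnorm : √(6 * (2 * (η * (1 - 3 * η)))⁻¹) * √(η * (1 - 3 * η) / 12) = 1 / 2 := by
      rw [← sqrt_mul (by positivity), show 6 * (2 * (η * (1 - 3 * η)))⁻¹ * (η * (1 - 3 * η) / 12)
        = (1 / 2) ^ 2 by field_simp; norm_num, sqrt_sq (by norm_num)]
    rw [harg, inv_mul_eq_div, div_div,
      show √(6 * (2 * (η * (1 - 3 * η)))⁻¹) * (2 * π * √(η * (1 - 3 * η) / 12)) = π by
        linear_combination (2 * π) * hnorm]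
    ring
  · have hτ : 0 < τ * (1 - τ) := mul_pos hτ0 (by linarith)
    have hden : 0 < √(12 * τ * (1 - τ) * (1 - 3 * τ * (1 - τ))) :=
      sqrt_pos.2 (by nlinarith [sq_nonneg (τ - 1 / 2)])
    rw [mul_eq_zero, or_iff_right (by positivity), arctan_eq_zero_iff, div_eq_zero_iff,
      or_iff_left hden.ne', GaussianSignCorrelation.one_sub_six_mul_mul_one_sub_eq_zero_iff]
end
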